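/- Let I ⊆ R = K[x_1,…,x_n] be the monomial ideal generated by x^{v_1},…,x^{v_q} and let A be the n×q matrix with columns v_1,…,v_q. Then I is normal if and only if the system of linear inequalities x ≥ 0, xA ≥ 1 has the integer rounding property. -/

import Mathlib

/-!
A monomial `x^a` lies in `I^m` iff `Ay ≤ a` has a solution `y ∈ ℕ^q` with `|y| ≥ m`. Hence `I` is
normal iff, whenever `Ay ≤ p a` has an integer solution of size `≥ p m`, `Ay ≤ a` has one of
size `≥ m`. Clearing denominators turns a rational solution of the linear relaxation of `Ay ≤ a`
into an integer solution of a scaled system, so this is the integer rounding property as soon as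
the optimum of the linear program is attained at a rational point. Such a point comes from a real
optimum with the most active constraints: a rational solution of those active constraints violates
no other constraint, since otherwise moving towards it would make a new constraint active.
-/

open BigOperators Pointwise

/-- The monomial `x^a = x_1^{a_1} ⋯ x_n^{a_n}` in `K[x_1,…,x_n]`. -/
noncomputable def mono (K : Type*) [Field K] {n : ℕ} (a : Fin n → ℕ) :
    MvPolynomial (Fin n) K :=
  MvPolynomial.monomial (Finsupp.equivFunOnFinite.symm a) (1 : K)

/-- The polyhedron `Q(A) = {x ∈ ℝⁿ : x ≥ 0, xA ≥ 1}`, where `A` is the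
`n × q` matrix with columns `v 0, …, v (q-1)`. -/
def QA {n q : ℕ} (v : Fin q → Fin n → ℕ) : Set (Fin n → ℝ) :=
  {x | (∀ i, 0 ≤ x i) ∧ ∀ j, 1 ≤ ∑ i, x i * (v j i : ℝ)}

/-- The blocking polyhedron `B(Q) = {z ∈ ℝⁿ : z ≥ 0, ⟨z,x⟩ ≥ 1 ∀ x ∈ Q(A)}`. -/
def BQ {n q : ℕ} (v : Fin q → Fin n → ℕ) : Set (Fin n → ℝ) :=
  {z | (∀ i, 0 ≤ z i) ∧ ∀ x ∈ QA v, 1 ≤ ∑ i, z i * x i}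

/-- A set `S ⊆ ℝⁿ` has the integer decomposition property if for each `k ∈ ℕ`,
every integer vector in `k • S` is a sum of `k` integer vectors in `S`. -/
def HasIDP {n : ℕ} (S : Set (Fin n → ℝ)) : Prop :=
  ∀ (k : ℕ) (a : Fin n → ℤ), (fun i => (a i : ℝ)) ∈ (k : ℝ) • S →
    ∃ f : Fin k → Fin n → ℤ,
      (∀ j, (fun i => (f j i : ℝ)) ∈ S) ∧ a = ∑ j, f j

/-- The set of values `⟨y,1⟩` of real feasible solutions `y ≥ 0`, `Ay ≤ w` of
the linear program `max{⟨y,1⟩ : y ≥ 0, Ay ≤ w}`. -/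
def LPvalues {n q : ℕ} (v : Fin q → Fin n → ℕ) (w : Fin n → ℤ) : Set ℝ :=
  {s | ∃ y : Fin q → ℝ, (∀ j, 0 ≤ y j) ∧
    (∀ i, ∑ j, (v j i : ℝ) * y j ≤ (w i : ℝ)) ∧ s = ∑ j, y j}

/-- The system `x ≥ 0, xA ≥ 1` has the integer rounding property: for each
integer vector `w` for which `max{⟨y,1⟩ : y ≥ 0, Ay ≤ w}` is finite (the LP is
feasible and bounded), the integer program `max{⟨y,1⟩ : y ∈ ℕ^q, Ay ≤ w}`
attains exactly the floor of that maximum. -/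
def IntegerRoundingProperty {n q : ℕ} (v : Fin q → Fin n → ℕ) : Prop :=
  ∀ w : Fin n → ℤ, (LPvalues v w).Nonempty → BddAbove (LPvalues v w) →
    IsGreatest
      {s : ℤ | ∃ y : Fin q → ℕ, (∀ i, ∑ j, (v j i : ℤ) * (y j : ℤ) ≤ w i) ∧
        s = ∑ j, (y j : ℤ)}
      ⌊sSup (LPvalues v w)⌋

open Matrix

section Monomials

variable {K : Type*} [Field K] {n q : ℕ}

theorem mono_add (a b : Fin n → ℕ) : mono K (a + b) = mono K a * mono K b := by
  rw [mono, mono, mono, MvPolynomial.monomial_mul, one_mul]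
  congr 2; ext; rfl

theorem mono_zero : mono K (0 : Fin n → ℕ) = 1 := by
  rw [mono, ← MvPolynomial.C_1, ← MvPolynomial.monomial_zero']
  congr 2; ext; rfl

theorem mono_pow (a : Fin n → ℕ) (p : ℕ) : mono K a ^ p = mono K (p • a) := by
  rw [mono, mono, MvPolynomial.monomial_pow, one_pow]
  congr 2; ext; rfl

theorem mono_sum {ι : Type*} (s : Finset ι) (f : ι → Fin n → ℕ) :
    mono K (∑ i ∈ s, f i) = ∏ i ∈ s, mono K (f i) := by
  classical
  induction s using Finset.induction_on with
  | empty => simp [mono_zero]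
  | insert i s hi ih => rw [Finset.sum_insert hi, Finset.prod_insert hi, mono_add, ih]

theorem mono_mem_span_mono_image_iff {a : Fin n → ℕ} {E : Set (Fin n → ℕ)} :
    mono K a ∈ Ideal.span (mono K '' E) ↔ ∃ b ∈ E, b ≤ a := by
  classical
  rw [show mono K '' E = (fun s => MvPolynomial.monomial s (1 : K)) ''
      (Finsupp.equivFunOnFinite.symm '' E) by rw [Set.image_image]; rfl,
    mono, MvPolynomial.mem_ideal_span_monomial_image, MvPolynomial.support_monomial]
  simp only [one_ne_zero, if_false, Finset.mem_singleton, forall_eq, Set.exists_mem_image]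
  rfl

variable (K) in
noncomputable def monomialIdeal (v : Fin q → Fin n → ℕ) : Ideal (MvPolynomial (Fin n) K) :=
  Ideal.span {f | ∃ j, f = mono K (v j)}

theorem mono_mem_monomialIdeal (v : Fin q → Fin n → ℕ) (j : Fin q) :
    mono K (v j) ∈ monomialIdeal K v :=
  Ideal.subset_span ⟨j, rfl⟩

/-- The integer program `max {|y| : y ∈ ℕ^q, Ay ≤ a}` has value at least `m`. -/
def IPAtLeast (v : Fin q → Fin n → ℕ) (a : Fin n → ℕ) (m : ℕ) : Prop :=
  ∃ y : Fin q → ℕ, ∑ j, y j • v j ≤ a ∧ m ≤ ∑ j, y j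

def IPSaturated (v : Fin q → Fin n → ℕ) : Prop :=
  ∀ (i p : ℕ) (a : Fin n → ℕ), 0 < p → IPAtLeast v (p • a) (p * i) → IPAtLeast v a i

variable {v : Fin q → Fin n → ℕ}

theorem IPAtLeast.of_le {a b : Fin n → ℕ} {m : ℕ} (h : IPAtLeast v a m) (hab : a ≤ b) :
    IPAtLeast v b m :=
  let ⟨y, hya, hym⟩ := h
  ⟨y, hya.trans hab, hym⟩

theorem IPAtLeast.add_column {a : Fin n → ℕ} {m : ℕ} (h : IPAtLeast v a m) (j : Fin q) :
    IPAtLeast v (a + v j) (m + 1) := by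
  obtain ⟨y, hya, hym⟩ := h
  refine ⟨y + Pi.single j 1, ?_, ?_⟩
  · simpa [add_smul, Finset.sum_add_distrib, Pi.single_apply] using add_le_add_right hya (v j)
  · simpa [Finset.sum_add_distrib] using hym

theorem mono_mem_monomialIdeal_pow {a : Fin n → ℕ} {m : ℕ} (h : IPAtLeast v a m) :
    mono K a ∈ monomialIdeal K v ^ m := by
  obtain ⟨y, hya, hym⟩ := h
  have hprod : mono K (∑ j, y j • v j) ∈ monomialIdeal K v ^ ∑ j, y j := by
    rw [mono_sum, ← Finset.prod_pow_eq_pow_sum]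
    exact Ideal.prod_mem_prod fun j _ => by
      rw [← mono_pow]; exact Ideal.pow_mem_pow (mono_mem_monomialIdeal v j) _
  rw [← tsub_add_cancel_of_le hya, mono_add]
  exact Ideal.pow_le_pow_right hym (Ideal.mul_mem_left _ _ hprod)

theorem monomialIdeal_pow (m : ℕ) :
    monomialIdeal K v ^ m = Ideal.span (mono K '' {a | IPAtLeast v a m}) := by
  refine le_antisymm ?_ (Ideal.span_le.2 ?_)
  · induction m with
    | zero =>
      rw [pow_zero, Ideal.one_eq_top, top_le_iff, Ideal.eq_top_iff_one, ← mono_zero]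
      exact Ideal.subset_span ⟨0, ⟨0, by simp⟩, rfl⟩
    | succ m ih =>
      rw [pow_succ]
      refine (Ideal.mul_mono_left ih).trans ?_
      rw [monomialIdeal, Ideal.span_mul_span']
      refine Ideal.span_mono ?_
      rintro _ ⟨_, ⟨a, ha, rfl⟩, _, ⟨j, rfl⟩, rfl⟩
      exact ⟨a + v j, ha.add_column j, mono_add a (v j)⟩
  · rintro _ ⟨a, ha, rfl⟩
    exact mono_mem_monomialIdeal_pow ha

theorem mono_mem_monomialIdeal_pow_iff {a : Fin n → ℕ} {m : ℕ} :
    mono K a ∈ monomialIdeal K v ^ m ↔ IPAtLeast v a m := by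
  rw [monomialIdeal_pow, mono_mem_span_mono_image_iff]
  exact ⟨fun ⟨_, hb, hba⟩ => hb.of_le hba, fun h => ⟨a, h, le_rfl⟩⟩

theorem normal_iff_ipSaturated :
    (∀ i : ℕ, 1 ≤ i → monomialIdeal K v ^ i = Ideal.span {f | ∃ a : Fin n → ℕ, f = mono K a ∧
      ∃ p : ℕ, 0 < p ∧ mono K a ^ p ∈ monomialIdeal K v ^ (p * i)}) ↔ IPSaturated v := by
  constructor
  · intro h i p a hp ha
    rcases Nat.eq_zero_or_pos i with rfl | hi
    · exact ⟨0, by simp, Nat.zero_le _⟩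
    rw [← mono_mem_monomialIdeal_pow_iff (K := K), h i hi]
    exact Ideal.subset_span ⟨a, rfl, p, hp, by rwa [mono_pow, mono_mem_monomialIdeal_pow_iff]⟩
  · intro h i _
    rw [monomialIdeal_pow]
    congr 1
    ext f
    constructor
    · rintro ⟨a, ha, rfl⟩
      exact ⟨a, rfl, 1, one_pos, by rwa [pow_one, one_mul, mono_mem_monomialIdeal_pow_iff]⟩
    · rintro ⟨a, rfl, p, hp, ha⟩
      exact ⟨a, h i p a hp (by rwa [mono_pow, mono_mem_monomialIdeal_pow_iff] at ha), rfl⟩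

end Monomials

section RationalPoints

variable {ι κ : Type*} [Fintype ι] [Fintype κ]
variable {𝕜 : Type*} [Field 𝕜] [LinearOrder 𝕜] [IsStrictOrderedRing 𝕜]

theorem exists_ratio_test {u w d : ι → 𝕜} (hu : u ≤ d) (hw : ∃ i, 0 < w i) :
    ∃ θ : 𝕜, 0 ≤ θ ∧ u + θ • w ≤ d ∧ ∃ i, 0 < w i ∧ u i + θ * w i = d i := by
  classical
  obtain ⟨i₀, hi₀, hmin⟩ := (Finset.univ.filter fun i => 0 < w i).exists_min_image
    (fun i => (d i - u i) / w i) (by simpa [Finset.filter_nonempty_iff] using hw)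
  rw [Finset.mem_filter] at hi₀
  have hθ : 0 ≤ (d i₀ - u i₀) / w i₀ := div_nonneg (sub_nonneg.2 (hu i₀)) hi₀.2.le
  refine ⟨_, hθ, fun i => ?_, i₀, hi₀.2, by rw [div_mul_cancel₀ _ hi₀.2.ne']; ring⟩
  simp only [Pi.add_apply, Pi.smul_apply, smul_eq_mul]
  rcases lt_or_ge 0 (w i) with hwi | hwi
  · have := hmin i (by simp [hwi])
    rw [le_div_iff₀ hwi] at this
    linarith
  · linarith [mul_nonpos_of_nonneg_of_nonpos hθ hwi, hu i]

def activeRows (M : Matrix ι κ 𝕜) (d : ι → 𝕜) (y : κ → 𝕜) : Finset ι :=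
  Finset.univ.filter fun i => (M *ᵥ y) i = d i

theorem exists_card_activeRows_lt {M : Matrix ι κ 𝕜} {d : ι → 𝕜} {y z : κ → 𝕜}
    (hy : M *ᵥ y ≤ d) (hz : ∀ i ∈ activeRows M d y, (M *ᵥ z) i = d i) (hzd : ¬ M *ᵥ z ≤ d) :
    ∃ y', M *ᵥ y' ≤ d ∧ (activeRows M d y).card < (activeRows M d y').card := by
  classical
  have hact (i) (hi : i ∈ activeRows M d y) : (M *ᵥ (z - y)) i = 0 := by
    rw [mulVec_sub, Pi.sub_apply, hz i hi, (Finset.mem_filter.1 hi).2, sub_self]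
  obtain ⟨i, hi⟩ : ∃ i, d i < (M *ᵥ z) i := by simpa [Pi.le_def] using hzd
  obtain ⟨θ, -, hθ, i₀, hi₀, hi₀_act⟩ := exists_ratio_test (w := M *ᵥ (z - y)) hy
    ⟨i, by rw [mulVec_sub, Pi.sub_apply, sub_pos]; exact (hy i).trans_lt hi⟩
  have hMy' : M *ᵥ (y + θ • (z - y)) = M *ᵥ y + θ • M *ᵥ (z - y) := by
    rw [mulVec_add, mulVec_smul]
  refine ⟨y + θ • (z - y), hMy' ▸ hθ, ?_⟩
  have hsub : insert i₀ (activeRows M d y) ⊆ activeRows M d (y + θ • (z - y)) := by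
    intro i hi
    rcases Finset.mem_insert.1 hi with rfl | hi
    · simpa [activeRows, hMy'] using hi₀_act
    · simpa [activeRows, hMy', hact i hi] using (Finset.mem_filter.1 hi).2
  have hi₀_new : i₀ ∉ activeRows M d y := fun h => (hact i₀ h).not_gt hi₀
  exact (Finset.card_lt_card (Finset.ssubset_insert hi₀_new)).trans_le (Finset.card_le_card hsub)

/-- A `ℚ`-linear retraction `ℝ → ℚ` of the inclusion, applied coordinatewise, keeps every
rational linear equation satisfied by `y`. -/
theorem exists_rat_forall_dotProduct_eq (y : κ → ℝ) :
    ∃ r : κ → ℚ, ∀ (c : κ → ℚ) (e : ℚ), (fun j => (c j : ℝ)) ⬝ᵥ y = e → c ⬝ᵥ r = e := by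
  obtain ⟨π, hπ⟩ := (Algebra.linearMap ℚ ℝ).exists_leftInverse_of_injective
    (LinearMap.ker_eq_bot.2 Rat.cast_injective)
  have hπe (e : ℚ) : π e = e := LinearMap.congr_fun hπ e
  refine ⟨fun j => π (y j), fun c e h => ?_⟩
  rw [← hπe e, ← h]
  simp [dotProduct, map_sum, ← Rat.smul_def]

theorem exists_rat_mulVec_le (C : Matrix ι κ ℚ) (d : ι → ℚ)
    (h : ∃ y : κ → ℝ, C.map (↑) *ᵥ y ≤ fun i => (d i : ℝ)) : ∃ r : κ → ℚ, C *ᵥ r ≤ d := by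
  set M : Matrix ι κ ℝ := C.map (↑)
  set d' : ι → ℝ := fun i => (d i : ℝ)
  obtain ⟨_, ⟨⟨y, hy, rfl⟩, hmax⟩⟩ := BddAbove.exists_isGreatest_of_nonempty
    (S := (fun y => (activeRows M d' y).card) '' {y | M *ᵥ y ≤ d'})
    ⟨Fintype.card ι, by rintro _ ⟨y, -, rfl⟩; exact Finset.card_le_univ _⟩
    ((show Set.Nonempty _ from h).image _)
  obtain ⟨r, hr⟩ := exists_rat_forall_dotProduct_eq y
  have hcast : (M *ᵥ fun j => (r j : ℝ)) = fun i => ((C *ᵥ r) i : ℝ) :=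
    funext fun i => (RingHom.map_mulVec (Rat.castHom ℝ) C r i).symm
  refine ⟨r, by_contra fun hr_le => ?_⟩
  obtain ⟨y', hy', hlt⟩ := exists_card_activeRows_lt (z := fun j => (r j : ℝ)) hy
    (fun i hi => by
      rw [activeRows, Finset.mem_filter] at hi
      rw [hcast]; exact congrArg _ (hr (C i) (d i) hi.2))
    (by rw [hcast]; simpa [d', Pi.le_def] using hr_le)
  exact (hmax ⟨y', hy', rfl⟩).not_gt hlt

theorem exists_nat_mul_eq_natCast (r : κ → ℚ) (hr : 0 ≤ r) :
    ∃ p : ℕ, 0 < p ∧ ∃ z : κ → ℕ, ∀ j, (z j : ℚ) = p * r j := by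
  refine ⟨∏ j, (r j).den, Finset.prod_pos fun j _ => (r j).pos,
    fun j => (∏ j, (r j).den) / (r j).den * (r j).num.toNat, fun j => ?_⟩
  obtain ⟨k, hk⟩ : (r j).den ∣ ∏ j, (r j).den := Finset.dvd_prod_of_mem _ (Finset.mem_univ j)
  have hnum : (((r j).num.toNat : ℤ) : ℚ) = r j * (r j).den := by
    rw [Int.toNat_of_nonneg (Rat.num_nonneg.2 (hr j)), Rat.mul_den_eq_num]
  beta_reduce
  rw [hk, Nat.mul_div_cancel_left _ (r j).pos, Nat.cast_mul, Nat.cast_mul,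
    ← Int.cast_natCast ((r j).num.toNat), hnum]
  ring

end RationalPoints

section LinearProgram

variable {n q : ℕ} {v : Fin q → Fin n → ℕ}

theorem sum_nsmul_le_iff_int {y : Fin q → ℕ} {a : Fin n → ℕ} :
    ∑ j, y j • v j ≤ a ↔ ∀ t, ∑ j, (v j t : ℤ) * (y j : ℤ) ≤ (a t : ℤ) := by
  simp only [Pi.le_def, Finset.sum_apply, Pi.smul_apply, smul_eq_mul]
  norm_cast
  simp only [mul_comm]

variable (v) in
theorem LPvalues_nonempty_iff {w : Fin n → ℤ} : (LPvalues v w).Nonempty ↔ 0 ≤ w := by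
  refine ⟨fun ⟨_, y, hy0, hyw, _⟩ t => ?_, fun hw => ⟨0, 0, fun _ => le_rfl, fun t => ?_, by simp⟩⟩
  · exact_mod_cast (Finset.sum_nonneg fun j _ => mul_nonneg (Nat.cast_nonneg _) (hy0 j)).trans
      (hyw t)
  · simpa using hw t

theorem bddAbove_LPvalues (hv : ∀ j, v j ≠ 0) (w : Fin n → ℤ) : BddAbove (LPvalues v w) := by
  refine ⟨∑ t, (w t : ℝ), ?_⟩
  rintro _ ⟨y, hy0, hyw, rfl⟩
  have hcol (j : Fin q) : (1 : ℝ) ≤ ∑ t, (v j t : ℝ) := by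
    obtain ⟨t, ht⟩ := Function.ne_iff.1 (hv j)
    exact le_trans (by exact_mod_cast Nat.one_le_iff_ne_zero.2 ht)
      (Finset.single_le_sum (fun t _ => Nat.cast_nonneg (v j t)) (Finset.mem_univ t))
  calc ∑ j, y j ≤ ∑ j, (∑ t, (v j t : ℝ)) * y j :=
        Finset.sum_le_sum fun j _ => le_mul_of_one_le_left (hy0 j) (hcol j)
    _ = ∑ t, ∑ j, (v j t : ℝ) * y j := by simp_rw [Finset.sum_mul]; exact Finset.sum_comm
    _ ≤ ∑ t, (w t : ℝ) := Finset.sum_le_sum fun t _ => hyw t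

theorem sSup_mem_LPvalues {w : Fin n → ℤ} (hne : (LPvalues v w).Nonempty)
    (hbdd : BddAbove (LPvalues v w)) : sSup (LPvalues v w) ∈ LPvalues v w := by
  set P : Set (Fin q → ℝ) := {y | (∀ j, 0 ≤ y j) ∧ ∀ t, ∑ j, (v j t : ℝ) * y j ≤ w t}
  have himage : LPvalues v w = (fun y => ∑ j, y j) '' P := by
    ext s; simp [LPvalues, P, eq_comm, and_assoc]
  have hP : P ⊆ Set.Icc 0 fun _ => sSup (LPvalues v w) := fun y hy =>
    ⟨fun j => hy.1 j, fun j => (Finset.single_le_sum (fun j _ => hy.1 j) (Finset.mem_univ j)).trans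
      (le_csSup hbdd ⟨y, hy.1, hy.2, rfl⟩)⟩
  have hclosed : IsClosed P := by
    simp only [P, Set.ofPred_and, Set.ofPred_forall]
    exact (isClosed_iInter fun j => isClosed_le continuous_const (continuous_apply j)).inter
      (isClosed_iInter fun t => isClosed_le (by fun_prop) continuous_const)
  rw [himage] at hne ⊢
  exact ((isCompact_Icc.of_isClosed_subset hclosed hP).image (by fun_prop)).sSup_mem hne

theorem div_mem_LPvalues {a : Fin n → ℕ} {p : ℕ} (hp : 0 < p) {z : Fin q → ℕ}
    (hz : ∑ j, z j • v j ≤ p • a) : ((∑ j, z j : ℕ) : ℝ) / p ∈ LPvalues v fun t => a t := by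
  refine ⟨fun j => z j / p, fun j => by positivity, fun t => ?_, by push_cast; rw [Finset.sum_div]⟩
  have hzt : ∑ j, (z j : ℝ) * v j t ≤ p * a t := by
    exact_mod_cast (by simpa [Finset.sum_apply] using hz t : ∑ j, z j * v j t ≤ p * a t)
  have hsum : ∑ j, (v j t : ℝ) * (z j / p) = (∑ j, (z j : ℝ) * v j t) / p := by
    rw [Finset.sum_div]; exact Finset.sum_congr rfl fun j _ => by ring
  rw [Int.cast_natCast, hsum, div_le_iff₀ (by positivity)]
  linarith

variable (v) in
theorem exists_rat_feasible_of_real (a : Fin n → ℕ) (m : ℕ) (y : Fin q → ℝ) (hy : 0 ≤ y)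
    (hya : ∀ t, ∑ j, (v j t : ℝ) * y j ≤ a t) (hym : (m : ℝ) ≤ ∑ j, y j) :
    ∃ r : Fin q → ℚ, 0 ≤ r ∧ (∀ t, ∑ j, (v j t : ℚ) * r j ≤ a t) ∧ (m : ℚ) ≤ ∑ j, r j := by
  obtain ⟨r, hr⟩ := exists_rat_mulVec_le
    (Matrix.of (Sum.elim (fun j => -Pi.single j 1)
      (Sum.elim (fun t j => (v j t : ℚ)) fun (_ : Unit) _ => -1)))
    (Sum.elim 0 (Sum.elim (fun t => (a t : ℚ)) fun _ => -m))
    ⟨y, by simpa [Pi.le_def, Sum.forall, mulVec, dotProduct, Pi.single_apply, ite_mul,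
      apply_ite (Rat.cast : ℚ → ℝ)]
      using ⟨hy, hya, hym⟩⟩
  simp [Pi.le_def, Sum.forall, mulVec, dotProduct, Pi.single_apply, ite_mul] at hr
  exact ⟨r, hr.1, hr.2.1, hr.2.2⟩

theorem exists_IPAtLeast_nsmul_of_rat {a : Fin n → ℕ} {m : ℕ} (r : Fin q → ℚ) (hr0 : 0 ≤ r)
    (hra : ∀ t, ∑ j, (v j t : ℚ) * r j ≤ a t) (hrm : (m : ℚ) ≤ ∑ j, r j) :
    ∃ p, 0 < p ∧ IPAtLeast v (p • a) (p * m) := by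
  obtain ⟨p, hp, z, hz⟩ := exists_nat_mul_eq_natCast r hr0
  refine ⟨p, hp, z, fun t => ?_, ?_⟩
  · have : ∑ j, (z j : ℚ) * v j t ≤ p * a t := by
      simp_rw [hz, mul_assoc, ← Finset.mul_sum, mul_comm (r _)]
      exact mul_le_mul_of_nonneg_left (hra t) (Nat.cast_nonneg p)
    simpa [Finset.sum_apply] using (by exact_mod_cast this : ∑ j, z j * v j t ≤ p * a t)
  · have : (p * m : ℚ) ≤ ∑ j, (z j : ℚ) := by
      simp_rw [hz, ← Finset.mul_sum]
      exact mul_le_mul_of_nonneg_left hrm (Nat.cast_nonneg p)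
    exact_mod_cast this

theorem IntegerRoundingProperty.ipSaturated (h : IntegerRoundingProperty v) : IPSaturated v := by
  intro i p a hp ⟨z, hz, hzi⟩
  -- A zero column makes every size attainable; otherwise the linear program is bounded.
  by_cases hv : ∃ j, v j = 0
  · obtain ⟨j, hj⟩ := hv
    refine ⟨Pi.single j i, ?_, by simp⟩
    rw [Fintype.sum_eq_single j fun k hk => by simp [hk], hj, smul_zero]
    exact zero_le
  push Not at hv
  have hbdd := bddAbove_LPvalues hv fun t => a t
  obtain ⟨⟨y, hya, hy⟩, -⟩ := h _ ((LPvalues_nonempty_iff v).2 fun t => by simp) hbdd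
  refine ⟨y, sum_nsmul_le_iff_int.2 hya, ?_⟩
  have hi : (i : ℝ) ≤ sSup (LPvalues v fun t => a t) := by
    refine le_csSup_of_le hbdd (div_mem_LPvalues hp hz) ?_
    rw [le_div_iff₀ (by positivity)]
    exact_mod_cast (mul_comm p i ▸ hzi)
  have := Int.le_floor.2 (by exact_mod_cast hi : ((i : ℤ) : ℝ) ≤ _)
  rw [hy] at this
  exact_mod_cast this

theorem IPSaturated.integerRoundingProperty (h : IPSaturated v) : IntegerRoundingProperty v := by
  intro w hne hbdd
  obtain ⟨a, rfl⟩ : ∃ a : Fin n → ℕ, w = fun t => (a t : ℤ) :=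
    ⟨fun t => (w t).toNat,
      funext fun t => (Int.toNat_of_nonneg ((LPvalues_nonempty_iff v).1 hne t)).symm⟩
  set s := sSup (LPvalues v fun t => (a t : ℤ))
  have hub (y : Fin q → ℕ) (hy : ∑ j, y j • v j ≤ a) : (∑ j, y j : ℤ) ≤ ⌊s⌋ :=
    Int.le_floor.2 (by simpa using le_csSup hbdd (div_mem_LPvalues one_pos (by simpa using hy)))
  obtain ⟨m, hm⟩ : ∃ m : ℕ, (m : ℤ) = ⌊s⌋ :=
    ⟨_, Int.toNat_of_nonneg (by simpa using hub 0 (by simp))⟩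
  obtain ⟨y, hya, hym⟩ : IPAtLeast v a m := by
    obtain ⟨y, hy0, hya, hys⟩ := sSup_mem_LPvalues hne hbdd
    have hms : (m : ℝ) ≤ ∑ j, y j := by
      rw [← hys]; exact_mod_cast hm ▸ Int.floor_le s
    obtain ⟨r, hr0, hra, hrm⟩ := exists_rat_feasible_of_real v a m y hy0 (by simpa using hya) hms
    obtain ⟨p, hp, hpm⟩ := exists_IPAtLeast_nsmul_of_rat r hr0 hra hrm
    exact h m p a hp hpm
  refine ⟨⟨y, sum_nsmul_le_iff_int.1 hya, ?_⟩, ?_⟩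
  · exact (le_antisymm (hub y hya) (hm ▸ by exact_mod_cast hym)).symm
  · rintro _ ⟨y, hy, rfl⟩
    exact hub y (sum_nsmul_le_iff_int.2 hy)

end LinearProgram

/-- The monomial ideal `I = (x^{v_1},…,x^{v_q})` is normal iff
the system `x ≥ 0, xA ≥ 1` has the integer rounding property. -/
theorem monomial_ideal_normal_iff_integer_rounding
    (K : Type*) [Field K] (n q : ℕ) (v : Fin q → Fin n → ℕ)
    (I : Ideal (MvPolynomial (Fin n) K))
    (hI : I = Ideal.span {f | ∃ j, f = mono K (v j)}) :
    (∀ i : ℕ, 1 ≤ i →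
        I ^ i = Ideal.span {f | ∃ a : Fin n → ℕ, f = mono K a ∧
          ∃ p : ℕ, 0 < p ∧ mono K a ^ p ∈ I ^ (p * i)})
    ↔ IntegerRoundingProperty v := by
  subst hI
  exact normal_iff_ipSaturated.trans
    ⟨IPSaturated.integerRoundingProperty, IntegerRoundingProperty.ipSaturated⟩
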